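/- arXiv:1710.06855 — 4 statements merged into one kernel-verified Lean document; each statement's English description precedes it below -/
import Mathlib

section
/- If a nest 𝓛 on X satisfies condition (C3) — for every x ∈ X there exists L ∈ 𝓛 such that x is the supremum of L with respect to the reflexive closure of ⊲_𝓛 and x ∉ L — then 𝓛 T₀-separates X. -/
def nestRel {X : Type*} (ℒ : Set (Set X)) (x y : X) : Prop :=
  ∃ L ∈ ℒ, x ∈ L ∧ y ∉ L

/-- The reflexive closure ⊴_𝓛 of ⊲_𝓛. -/
def nestRelQ {X : Type*} (ℒ : Set (Set X)) (x y : X) : Prop :=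
  nestRel ℒ x y ∨ x = y

/-- k is a supremum (least upper bound) of L with respect to ⊴_𝓛. -/
def IsSupQ {X : Type*} (ℒ : Set (Set X)) (L : Set X) (k : X) : Prop :=
  (∀ a ∈ L, nestRelQ ℒ a k) ∧ ∀ m, (∀ a ∈ L, nestRelQ ℒ a m) → nestRelQ ℒ k m

def T0Separates {X : Type*} (𝒮 : Set (Set X)) : Prop :=
  ∀ x y : X, x ≠ y → ∃ S ∈ 𝒮, (x ∈ S ∧ y ∉ S) ∨ (y ∈ S ∧ x ∉ S)

theorem c3_implies_t0 {X : Type*} (ℒ : Set (Set X))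
    (hnest : ∀ M ∈ ℒ, ∀ N ∈ ℒ, M ⊆ N ∨ N ⊆ M)
    (hC3 : ∀ x : X, ∃ L ∈ ℒ, x ∉ L ∧ IsSupQ ℒ L x) :
    T0Separates ℒ := by
  intro x y hxy
  by_contra hsep
  push_neg at hsep
  have hiff : ∀ L ∈ ℒ, (x ∈ L ↔ y ∈ L) := by
    intro L hL
    have := hsep L hL
    tauto
  obtain ⟨Lx, hLx, hxnot, hub, hlub⟩ := hC3 x
  have hyub : ∀ a ∈ Lx, nestRelQ ℒ a y := by
    intro a ha
    rcases hub a ha with ⟨M, hM, haM, hxM⟩ | rfl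
    · exact Or.inl ⟨M, hM, haM, fun hy => hxM ((hiff M hM).mpr hy)⟩
    · exact absurd ha hxnot
  rcases hlub y hyub with ⟨M, hM, hxM, hyM⟩ | rfl
  · exact hyM ((hiff M hM).mp hxM)
  · exact hxy rfl
end

section
/- Let 𝓛 be a nest on X, L ∈ 𝓛, and suppose k is a supremum of L with respect to the reflexive closure of ⊲_𝓛. Then X \ ↑k ⊆ L, where ↑k = {y : k ⊴_𝓛 y}. -/
theorem compl_upClosure_subset {X : Type*} (ℒ : Set (Set X))
    (hnest : ∀ M ∈ ℒ, ∀ N ∈ ℒ, M ⊆ N ∨ N ⊆ M)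
    (L : Set X) (hL : L ∈ ℒ) (k : X) (hk : IsSupQ ℒ L k) :
    {y : X | nestRelQ ℒ k y}ᶜ ⊆ L := by
  intro y hy
  by_contra hyL
  exact hy (hk.2 y (fun a ha => Or.inl ⟨L, hL, ha, hyL⟩))
end

section
/- Let 𝓛 be a T₀-separating nest on X and M ∈ 𝓛. Then M is a lower set with respect to ⊲_𝓛 if and only if M has no ⊲_𝓛-maximal element (i.e., for every x ∈ M there exists y ∈ M with x ⊲_𝓛 y). -/
theorem lowerSet_iff_no_maximal {X : Type*} (ℒ : Set (Set X))
    (hnest : ∀ M ∈ ℒ, ∀ N ∈ ℒ, M ⊆ N ∨ N ⊆ M)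
    (hT0 : T0Separates ℒ)
    (M : Set X) (hM : M ∈ ℒ) :
    M = {x : X | ∃ y ∈ M, nestRel ℒ x y} ↔
      ∀ x ∈ M, ∃ y ∈ M, nestRel ℒ x y := by
  constructor
  · intro h x hx
    have : x ∈ {x : X | ∃ y ∈ M, nestRel ℒ x y} := h ▸ hx
    exact this
  · intro h
    ext x
    constructor
    · intro hx; exact h x hx
    · rintro ⟨y, hy, L, hL, hxL, hyL⟩
      rcases hnest L hL M hM with hsub | hsub
      · exact hsub hxL
      · exact absurd (hsub hy) hyL
end

section
/- Let 𝓛 be a nest on X and Y ⊆ X. Then X = ↑Y if and only if there exists a subfamily 𝓛' ⊆ 𝓛 with ⋂𝓛' = ∅ such that every member of 𝓛' meets Y. -/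
theorem univ_eq_upClosure_iff {X : Type*} (ℒ : Set (Set X))
    (hnest : ∀ M ∈ ℒ, ∀ N ∈ ℒ, M ⊆ N ∨ N ⊆ M) (Y : Set X) :
    (Set.univ : Set X) = {x : X | ∃ y ∈ Y, nestRel ℒ y x} ↔
      ∃ ℒ' ⊆ ℒ, ⋂₀ ℒ' = ∅ ∧ ∀ L ∈ ℒ', (Y ∩ L).Nonempty := by
  constructor
  · intro h
    refine ⟨{L ∈ ℒ | (Y ∩ L).Nonempty}, fun L hL => hL.1, ?_, fun L hL => hL.2⟩
    ext x
    simp only [Set.mem_sInter, Set.mem_empty_iff_false, iff_false, not_forall]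
    have hx : x ∈ {x : X | ∃ y ∈ Y, nestRel ℒ y x} := h ▸ Set.mem_univ x
    obtain ⟨y, hy, L, hL, hyL, hxL⟩ := hx
    exact ⟨L, ⟨hL, y, hy, hyL⟩, hxL⟩
  · rintro ⟨ℒ', hsub, hint, hmeet⟩
    ext x
    simp only [Set.mem_univ, true_iff, Set.mem_setOf_eq]
    have : x ∉ ⋂₀ ℒ' := by rw [hint]; exact Set.notMem_empty x
    obtain ⟨L, hL, hxL⟩ := by simpa [Set.mem_sInter] using this
    obtain ⟨y, hy, hyL⟩ := hmeet L hL
    exact ⟨y, hy, L, hsub hL, hyL, hxL⟩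
end
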